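/- Let r : ℝ → ℝ be a continuous 1-periodic function that is not constant, and let q ∈ ℝ with q ≠ 0. Then there exists a positive, 1-periodic, C² function D : ℝ → ℝ such that whenever (k_q, ψ) is a principal eigenpair of L_q^0[r;D] and (k₀, φ) is a principal eigenpair of L_0^0[r;D], one has k_q > k₀. -/

import Mathlib

open Real MeasureTheory Set Filter Topology

noncomputable section

/-- The operator `L_q^λ[r;D]` acting on C² functions `ψ`:
`(L_q^λ[r;D]ψ)(x) = D ψ'' + ((1+q)D' − 2λD) ψ' + (qD'' + λ²D − (1+q)λD' + r) ψ`. -/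
def Lop (q lam : ℝ) (r D ψ : ℝ → ℝ) (x : ℝ) : ℝ :=
  D x * deriv (deriv ψ) x + ((1 + q) * deriv D x - 2 * lam * D x) * deriv ψ x +
    (q * deriv (deriv D) x + lam ^ 2 * D x - (1 + q) * lam * deriv D x + r x) * ψ x

/-- `(k, ψ)` is a principal eigenpair of `L_q^λ[r;D]`: `ψ` is a positive, 1-periodic,
C² function with `L_q^λ[r;D]ψ = kψ`. -/
def IsEigenpair (q lam : ℝ) (r D : ℝ → ℝ) (k : ℝ) (ψ : ℝ → ℝ) : Prop :=
  ContDiff ℝ 2 ψ ∧ (∀ x, 0 < ψ x) ∧ Function.Periodic ψ 1 ∧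
    ∀ x, Lop q lam r D ψ x = k * ψ x

/-- The Freidlin–Gärtner infimum `inf_{λ>0} k(λ)/λ`, as an extended real number. -/
def speed (k : ℝ → ℝ) : EReal := ⨅ l : {l : ℝ // 0 < l}, ((k l.1 / l.1 : ℝ) : EReal)

/-!
Take `D = A e^p`. For `λ = 0` the operator is `(D^{1-q} (D^q ψ)')' + r ψ`, so dividing the
eigen-equation by `D^q ψ` and integrating over a period shows that `k_q` is at least the mean of
`r` with respect to the weight `D^{-q}`, whatever `A` is. Choosing `D^{-q}` to be `1` plus a bump
where `r` exceeds its mean `r̄` makes this weighted mean larger than `r̄`. On the other side,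
`exp (τ / A)` with `τ' = (c + ∫₀ˣ (r̄ - r)) / e^p` is a supersolution of `L_0` for the value
`r̄ + O(1/A)`, so the maximum principle applied to `φ / exp (τ / A)` gives `k_0 ≤ r̄ + O(1/A)`.
-/

namespace Function.Periodic

variable {f : ℝ → ℝ} {c : ℝ}

theorem exists_forall_le_of_continuous (hf : Periodic f c) (hc : c ≠ 0)
    (hcont : Continuous f) : ∃ x₀, ∀ x, f x ≤ f x₀ := by
  obtain ⟨_, ⟨x₀, rfl⟩, hmax⟩ :=
    (hf.compact_of_continuous hc hcont).exists_isGreatest (range_nonempty f)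
  exact ⟨x₀, fun x => hmax ⟨x, rfl⟩⟩

protected theorem deriv (hf : Periodic f c) : Periodic (deriv f) c := fun x => by
  rw [← deriv_comp_add_const, funext hf]

theorem primitive_of_integral_eq_zero (hf : Periodic f c)
    (hint : ∀ a b, IntervalIntegrable f volume a b) (hzero : ∫ x in 0..c, f x = 0) :
    Periodic (fun x => ∫ t in 0..x, f t) c := fun x => by
  show ∫ t in 0..x + c, f t = ∫ t in 0..x, f t
  rw [hf.intervalIntegral_add_eq_add 0 x hint, zero_add, hzero, add_zero]

theorem exists_integral_lt (hf : Periodic f 1) (hcont : Continuous f) (hnc : ¬ ∃ c, ∀ x, f x = c) :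
    ∃ x₀, ∫ x in 0..1, f x < f x₀ := by
  by_contra! hle
  obtain ⟨x₁, hx₁⟩ : ∃ x₁, f x₁ ≠ ∫ x in 0..1, f x := by
    by_contra! h
    exact hnc ⟨_, h⟩
  obtain ⟨y, hy, hxy⟩ := hf.exists_mem_Ico₀ one_pos x₁
  have hlt := intervalIntegral.integral_lt_integral_of_continuousOn_of_le_of_exists_lt one_pos
    hcont.continuousOn continuousOn_const (fun x _ => hle x)
    ⟨y, Ico_subset_Icc_self hy, hxy ▸ (hle x₁).lt_of_ne hx₁⟩
  simp at hlt

end Function.Periodic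

theorem contDiff_primitive {n : ℕ} {f : ℝ → ℝ} (hf : ContDiff ℝ n f) :
    ContDiff ℝ (n + 1) (fun u => ∫ t in 0..u, f t) := by
  rw [contDiff_succ_iff_deriv]
  refine ⟨fun x => (hf.continuous.integral_hasStrictDerivAt 0 x).hasDerivAt.differentiableAt,
    by simp, ?_⟩
  rwa [funext fun x => (hf.continuous.integral_hasStrictDerivAt 0 x).hasDerivAt.deriv]

theorem IsLocalMax.deriv_deriv_nonpos {f : ℝ → ℝ} {x₀ : ℝ} (h : IsLocalMax f x₀)
    (hc : ContinuousAt f x₀) : deriv (deriv f) x₀ ≤ 0 := by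
  by_contra! hpos
  have hconst : f =ᶠ[𝓝 x₀] fun _ => f x₀ :=
    ((isLocalMin_of_deriv_deriv_pos hpos h.deriv_eq_zero hc).and h).mono
      fun x hx => le_antisymm hx.2 hx.1
  rw [hconst.deriv.deriv_eq] at hpos
  simp at hpos

theorem lop_mul {q lam : ℝ} {r D m h : ℝ → ℝ} (hm : ContDiff ℝ 2 m) (hh : ContDiff ℝ 2 h)
    (x : ℝ) :
    Lop q lam r D (fun y => m y * h y) x = m x * Lop q lam r D h x +
      D x * (deriv (deriv m) x * h x + 2 * deriv m x * deriv h x) +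
      ((1 + q) * deriv D x - 2 * lam * D x) * deriv m x * h x := by
  have hd : deriv (fun y => m y * h y) = fun y => deriv m y * h y + m y * deriv h y :=
    funext fun y =>
      deriv_fun_mul (hm.differentiable two_ne_zero y) (hh.differentiable two_ne_zero y)
  have hm' := hm.differentiable_deriv_two x
  have hh' := hh.differentiable_deriv_two x
  have hmd := hm.differentiable two_ne_zero x
  have hhd := hh.differentiable two_ne_zero x
  simp only [Lop, hd]
  rw [((hm'.hasDerivAt.fun_mul hhd.hasDerivAt).fun_add
    (hmd.hasDerivAt.fun_mul hh'.hasDerivAt)).deriv]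
  ring

theorem IsEigenpair.le_of_lop_le {q lam k κ : ℝ} {r D φ h : ℝ → ℝ}
    (hφ : IsEigenpair q lam r D k φ) (hD : ∀ x, 0 ≤ D x) (hh : ContDiff ℝ 2 h)
    (hpos : ∀ x, 0 < h x) (hper : Function.Periodic h 1)
    (hsuper : ∀ x, Lop q lam r D h x ≤ κ * h x) : k ≤ κ := by
  obtain ⟨hφC, hφpos, hφper, hφeq⟩ := hφ
  set m := fun x => φ x / h x
  have hmC : ContDiff ℝ 2 m := hφC.div hh fun x => (hpos x).ne'
  obtain ⟨x₀, hmax⟩ := Function.Periodic.exists_forall_le_of_continuous (f := m)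
    (fun x => by simp only [m, hφper x, hper x]) one_ne_zero hmC.continuous
  have hmax' : IsLocalMax m x₀ := Eventually.of_forall hmax
  have hφm : φ = fun y => m y * h y := funext fun y => (div_mul_cancel₀ _ (hpos y).ne').symm
  have key := lop_mul (q := q) (lam := lam) (r := r) (D := D) hmC hh x₀
  rw [← hφm, hφeq, hmax'.deriv_eq_zero] at key
  have hm'' := hmax'.deriv_deriv_nonpos hmC.continuous.continuousAt
  have hmpos : 0 < m x₀ := div_pos (hφpos x₀) (hpos x₀)
  have : k * φ x₀ ≤ κ * φ x₀ := calc
    k * φ x₀ = m x₀ * Lop q lam r D h x₀ + D x₀ * deriv (deriv m) x₀ * h x₀ := by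
      rw [key]; ring
    _ ≤ m x₀ * (κ * h x₀) + 0 := by
      gcongr
      · exact hsuper x₀
      · exact mul_nonpos_of_nonpos_of_nonneg (mul_nonpos_of_nonneg_of_nonpos (hD x₀) hm'')
          (hpos x₀).le
    _ = κ * φ x₀ := by rw [hφm]; ring
  exact le_of_mul_le_mul_right this (hφpos x₀)

theorem lop_zero_zero_eq {r D ψ : ℝ → ℝ} {x : ℝ} (hD : DifferentiableAt ℝ D x)
    (hψ : DifferentiableAt ℝ (deriv ψ) x) :
    Lop 0 0 r D ψ x = deriv (fun y => D y * deriv ψ y) x + r x * ψ x := by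
  rw [(hD.hasDerivAt.fun_mul hψ.hasDerivAt).deriv, Lop]
  ring

theorem lop_zero_zero_exp_div {r D₀ G g τ : ℝ → ℝ} {A : ℝ} (hA : A ≠ 0)
    (hD₀ : Differentiable ℝ D₀) (hD₀ne : ∀ x, D₀ x ≠ 0) (hG : ∀ x, HasDerivAt G (g x) x)
    (hτ : ∀ x, HasDerivAt τ (G x / D₀ x) x) (hτC : ContDiff ℝ 2 τ) (x : ℝ) :
    Lop 0 0 r (fun y => A * D₀ y) (fun y => exp (τ y / A)) x =
      (g x + r x + G x ^ 2 / (A * D₀ x)) * exp (τ x / A) := by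
  have hh' (y : ℝ) : HasDerivAt (fun y => exp (τ y / A)) (exp (τ y / A) * (G y / D₀ y / A)) y :=
    ((hτ y).div_const A).exp
  have hflux : (fun y => A * D₀ y * deriv (fun y => exp (τ y / A)) y) =
      fun y => G y * exp (τ y / A) := by
    funext y
    rw [(hh' y).deriv]
    field_simp [hD₀ne y]
  rw [lop_zero_zero_eq ((hD₀ x).const_mul A) ((hτC.div_const A).exp.differentiable_deriv_two x),
    hflux, ((hG x).fun_mul (hh' x)).deriv]
  field_simp [hD₀ne x]
  ring

theorem exists_supersolution_lop_zero_zero {r D₀ : ℝ → ℝ} (hr : Continuous r)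
    (hrper : Function.Periodic r 1) (hD₀ : ContDiff ℝ 1 D₀) (hD₀pos : ∀ x, 0 < D₀ x)
    (hD₀per : Function.Periodic D₀ 1) :
    ∃ M, ∀ A > 0, ∃ h : ℝ → ℝ, ContDiff ℝ 2 h ∧ (∀ x, 0 < h x) ∧ Function.Periodic h 1 ∧
      ∀ x, Lop 0 0 r (fun y => A * D₀ y) h x ≤ ((∫ x in 0..1, r x) + M / A) * h x := by
  set rbar := ∫ x in 0..1, r x
  have hD₀ne (x : ℝ) : D₀ x ≠ 0 := (hD₀pos x).ne'
  have hrc : Continuous fun t => rbar - r t := by fun_prop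
  set R := fun u => ∫ t in 0..u, (rbar - r t)
  have hRC : ContDiff ℝ 1 R := contDiff_primitive (n := 0) (contDiff_zero.2 hrc)
  have hRper : Function.Periodic R 1 :=
    Function.Periodic.primitive_of_integral_eq_zero (fun x => by simp [hrper x])
      (fun _ _ => hrc.intervalIntegrable _ _)
      (by simp [intervalIntegral.integral_sub, hr.intervalIntegrable, rbar])
  have hint {f : ℝ → ℝ} (hf : Continuous f) : IntervalIntegrable f volume 0 1 :=
    hf.intervalIntegrable _ _
  have hI : 0 < ∫ x in 0..1, 1 / D₀ x :=
    intervalIntegral.intervalIntegral_pos_of_pos_on (hint (by fun_prop (disch := exact hD₀ne)))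
      (fun x _ => one_div_pos.2 (hD₀pos x)) one_pos
  -- `c` gives `(c + R) / D₀` mean zero, so that its primitive `τ` is periodic
  set c := -(∫ x in 0..1, R x / D₀ x) / ∫ x in 0..1, 1 / D₀ x
  have hTC : ContDiff ℝ 1 fun x => (c + R x) / D₀ x := (contDiff_const.add hRC).div hD₀ hD₀ne
  have hTint : ∫ x in 0..1, (c + R x) / D₀ x = 0 := by
    simp only [add_div, div_eq_mul_one_div c]
    rw [intervalIntegral.integral_add (hint (by fun_prop (disch := exact hD₀ne)))
        (hint (by fun_prop (disch := exact hD₀ne))),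
      intervalIntegral.integral_const_mul, div_mul_cancel₀ _ hI.ne', neg_add_cancel]
  set τ := fun u => ∫ t in 0..u, (c + R t) / D₀ t
  have hτC : ContDiff ℝ 2 τ := contDiff_primitive (n := 1) hTC
  have hτper : Function.Periodic τ 1 :=
    Function.Periodic.primitive_of_integral_eq_zero (fun x => by simp only [hRper x, hD₀per x])
      (fun _ _ => hTC.continuous.intervalIntegrable _ _) hTint
  obtain ⟨xM, hM⟩ := Function.Periodic.exists_forall_le_of_continuous
    (f := fun x => (c + R x) ^ 2 / D₀ x) (fun x => by simp only [hRper x, hD₀per x])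
    one_ne_zero (by fun_prop (disch := exact hD₀ne))
  refine ⟨(c + R xM) ^ 2 / D₀ xM, fun A hA => ⟨fun x => exp (τ x / A), (hτC.div_const A).exp,
    fun x => exp_pos _, fun x => by simp only [hτper x], fun x => ?_⟩⟩
  rw [lop_zero_zero_exp_div hA.ne' (hD₀.differentiable one_ne_zero) hD₀ne
    (fun x => ((hrc.integral_hasStrictDerivAt 0 x).hasDerivAt.const_add c))
    (fun x => (hTC.continuous.integral_hasStrictDerivAt 0 x).hasDerivAt) hτC, sub_add_cancel,
    ← div_div, div_right_comm]
  gcongr (rbar + ?_ / A) * _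
  exact hM x

theorem exists_isEigenpair_zero_zero_lt {r D₀ : ℝ → ℝ} (hr : Continuous r)
    (hrper : Function.Periodic r 1) (hD₀ : ContDiff ℝ 1 D₀) (hD₀pos : ∀ x, 0 < D₀ x)
    (hD₀per : Function.Periodic D₀ 1) {ε : ℝ} (hε : 0 < ε) :
    ∃ A > 0, ∀ k φ, IsEigenpair 0 0 r (fun x => A * D₀ x) k φ →
      k < (∫ x in 0..1, r x) + ε := by
  obtain ⟨M, hM⟩ := exists_supersolution_lop_zero_zero hr hrper hD₀ hD₀pos hD₀per
  have hA : 0 < (|M| + 1) / ε := by positivity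
  refine ⟨(|M| + 1) / ε, hA, fun k φ hφ => ?_⟩
  obtain ⟨h, hhC, hhpos, hhper, hsuper⟩ := hM _ hA
  have hk := hφ.le_of_lop_le (fun x => (mul_pos hA (hD₀pos x)).le) hhC hhpos hhper hsuper
  have hMε : M / ((|M| + 1) / ε) < ε := by
    rw [div_div_eq_mul_div, div_lt_iff₀ (by positivity)]
    nlinarith [le_abs_self M]
  linarith

-- The eigen-equation divided by `D^q ψ`, written for `F = A^q D^{1-q} (log (D^q ψ))'`.
theorem IsEigenpair.hasDerivAt_flux {q k A : ℝ} {r p ψ : ℝ → ℝ}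
    (hψ : IsEigenpair q 0 r (fun x => A * exp (p x)) k ψ) (hp : ContDiff ℝ 2 p) (x : ℝ) :
    HasDerivAt (fun x => A * exp ((1 - q) * p x) * (q * deriv p x + deriv ψ x / ψ x))
      (exp (-q * p x) * (k - r x) -
        A * exp ((1 - q) * p x) * (q * deriv p x + deriv ψ x / ψ x) ^ 2) x := by
  obtain ⟨hψC, hψpos, -, hψeq⟩ := hψ
  have hp' (x : ℝ) : HasDerivAt p (deriv p x) x := (hp.differentiable two_ne_zero x).hasDerivAt
  have hp'' : HasDerivAt (deriv p) (deriv (deriv p) x) x :=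
    (hp.differentiable_deriv_two x).hasDerivAt
  have hψ' : HasDerivAt ψ (deriv ψ x) x := (hψC.differentiable two_ne_zero x).hasDerivAt
  have hψ'' : HasDerivAt (deriv ψ) (deriv (deriv ψ) x) x :=
    (hψC.differentiable_deriv_two x).hasDerivAt
  have hD' : deriv (fun x => A * exp (p x)) = fun x => A * (exp (p x) * deriv p x) :=
    funext fun x => ((hp' x).exp.const_mul A).deriv
  have heq := hψeq x
  rw [Lop, hD', (((hp' x).exp.fun_mul hp'').const_mul A).deriv] at heq
  have hexp : exp (-q * p x) * exp (p x) = exp ((1 - q) * p x) := by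
    rw [← exp_add]; ring_nf
  have hs := (hψpos x).ne'
  refine ((((hp' x).const_mul (1 - q)).exp.const_mul A).fun_mul
    ((hp''.const_mul q).fun_add (hψ''.fun_div hψ' hs))).congr_deriv ?_
  generalize exp (-q * p x) = w at hexp ⊢
  field_simp
  linear_combination (w * ψ x) * heq - A * ψ x * (q * deriv p x ^ 2 * ψ x +
    (1 + q) * deriv p x * deriv ψ x + q * deriv (deriv p) x * ψ x + deriv (deriv ψ) x) * hexp

theorem IsEigenpair.integral_exp_mul_div_le {q k A : ℝ} {r p ψ : ℝ → ℝ}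
    (hψ : IsEigenpair q 0 r (fun x => A * exp (p x)) k ψ) (hA : 0 < A) (hp : ContDiff ℝ 2 p)
    (hpper : Function.Periodic p 1) (hr : Continuous r) :
    (∫ x in 0..1, exp (-q * p x) * r x) / (∫ x in 0..1, exp (-q * p x)) ≤ k := by
  obtain ⟨hψC, hψpos, hψper, -⟩ := id hψ
  set u := fun x => q * deriv p x + deriv ψ x / ψ x
  set F := fun x => A * exp ((1 - q) * p x) * u x
  have hu : Continuous u := (continuous_const.mul (hp.continuous_deriv one_le_two)).add
    ((hψC.continuous_deriv one_le_two).div hψC.continuous fun x => (hψpos x).ne')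
  have hpc := hp.continuous
  have hFper : Function.Periodic F 1 := fun x => by
    simp only [F, u, hpper x, hpper.deriv x, hψper x, hψper.deriv x]
  have hG : Continuous fun x =>
      exp (-q * p x) * (k - r x) - A * exp ((1 - q) * p x) * u x ^ 2 := by
    fun_prop
  have hFTC :
      ∫ x in 0..1, (exp (-q * p x) * (k - r x) - A * exp ((1 - q) * p x) * u x ^ 2) = 0 := by
    rw [intervalIntegral.integral_eq_sub_of_hasDerivAt (fun x _ => hψ.hasDerivAt_flux hp x)
      (hG.intervalIntegrable _ _)]
    have h01 := hFper 0
    rw [zero_add] at h01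
    exact sub_eq_zero.2 h01
  have hint {f : ℝ → ℝ} (hf : Continuous f) : IntervalIntegrable f volume 0 1 :=
    hf.intervalIntegrable _ _
  have hsq : Continuous fun x => A * exp ((1 - q) * p x) * u x ^ 2 := by fun_prop
  rw [div_le_iff₀ (intervalIntegral.intervalIntegral_pos_of_pos_on (hint (by fun_prop))
    (fun x _ => exp_pos _) one_pos), ← sub_nonneg]
  calc 0 ≤ ∫ x in 0..1, A * exp ((1 - q) * p x) * u x ^ 2 :=
        intervalIntegral.integral_nonneg zero_le_one fun x _ => by positivity
    _ = (∫ x in 0..1, (exp (-q * p x) * (k - r x) - A * exp ((1 - q) * p x) * u x ^ 2)) +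
        ∫ x in 0..1, A * exp ((1 - q) * p x) * u x ^ 2 := by rw [hFTC, zero_add]
    _ = k * (∫ x in 0..1, exp (-q * p x)) - ∫ x in 0..1, exp (-q * p x) * r x := by
      rw [← intervalIntegral.integral_add (hint hG) (hint hsq),
        ← intervalIntegral.integral_const_mul, ← intervalIntegral.integral_sub
          (hint (by fun_prop)) (hint (by fun_prop))]
      exact intervalIntegral.integral_congr fun x _ => by ring

theorem exists_periodic_bump (x₀ : ℝ) {θ : ℝ} (hθ : 0 < θ) (hθ' : θ ≤ 1 / 2) :
    ∃ η : ℝ → ℝ, ContDiff ℝ 2 η ∧ (∀ x, 0 ≤ η x) ∧ Function.Periodic η 1 ∧ 0 < η x₀ ∧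
      ∀ x, |x - x₀| ≤ 1 / 2 → θ ≤ |x - x₀| → η x = 0 := by
  refine ⟨fun x => expNegInvGlue (cos (2 * π * (x - x₀)) - cos (2 * π * θ)),
    expNegInvGlue.contDiff.comp (by fun_prop), fun x => expNegInvGlue.nonneg _, fun x => ?_,
    expNegInvGlue.pos_of_pos ?_, fun x hx hθx => expNegInvGlue.zero_of_nonpos ?_⟩
  · simp only [mul_sub, mul_add, mul_one, add_sub_right_comm, cos_add_two_pi]
  · rw [sub_self, mul_zero, cos_zero, sub_pos, ← cos_zero]
    exact cos_lt_cos_of_nonneg_of_le_pi le_rfl (by nlinarith [pi_pos]) (by positivity)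
  · rw [sub_nonpos, ← cos_abs (2 * π * (x - x₀)), abs_mul, abs_of_pos two_pi_pos]
    exact cos_le_cos_of_nonneg_of_le_pi (by positivity) (by nlinarith [pi_pos])
      (by nlinarith [pi_pos])

theorem exists_weight_integral_lt_div {r : ℝ → ℝ} (hr : Continuous r)
    (hper : Function.Periodic r 1) (hnc : ¬ ∃ c, ∀ x, r x = c) :
    ∃ w : ℝ → ℝ, ContDiff ℝ 2 w ∧ (∀ x, 0 < w x) ∧ Function.Periodic w 1 ∧
      ∫ x in 0..1, r x < (∫ x in 0..1, w x * r x) / ∫ x in 0..1, w x := by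
  set rbar := ∫ y in 0..1, r y
  obtain ⟨x₀, hx₀⟩ := hper.exists_integral_lt hr hnc
  obtain ⟨ε, hε, hnear⟩ :=
    Metric.eventually_nhds_iff.1 (hr.continuousAt.eventually (lt_mem_nhds hx₀))
  obtain ⟨η, hηC, hη0, hηper, hηx₀, hηzero⟩ :=
    exists_periodic_bump x₀ (lt_min hε one_half_pos) (min_le_right ε (1 / 2))
  have hwpos (x : ℝ) : 0 < 1 + η x := by linarith [hη0 x]
  refine ⟨fun x => 1 + η x, contDiff_const.add hηC, hwpos, fun x => by simp only [hηper x], ?_⟩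
  have hint {f : ℝ → ℝ} (hf : Continuous f) : IntervalIntegrable f volume 0 1 :=
    hf.intervalIntegrable _ _
  have hηc := hηC.continuous
  have hf : Continuous fun x => η x * (r x - rbar) := by fun_prop
  have hnonneg : ∀ x ∈ Ioc (x₀ - 1 / 2) (x₀ - 1 / 2 + 1), 0 ≤ η x * (r x - rbar) := by
    intro x hx
    by_cases hxε : |x - x₀| < min ε (1 / 2)
    · exact mul_nonneg (hη0 x) (sub_pos.2 (hnear (lt_of_lt_of_le hxε (min_le_left _ _)))).le
    · rw [hηzero x (abs_le.2 ⟨by linarith [hx.1], by linarith [hx.2]⟩) (not_lt.1 hxε),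
        zero_mul]
  rw [lt_div_iff₀ (intervalIntegral.intervalIntegral_pos_of_pos_on (hint (by fun_prop))
    (fun x _ => hwpos x) one_pos), ← sub_pos]
  calc 0 < ∫ x in (x₀ - 1 / 2)..(x₀ - 1 / 2 + 1), η x * (r x - rbar) := by
        simpa using intervalIntegral.integral_lt_integral_of_continuousOn_of_le_of_exists_lt
          (f := 0) (by linarith) continuousOn_const hf.continuousOn hnonneg
          ⟨x₀, ⟨by linarith, by linarith⟩, mul_pos hηx₀ (sub_pos.2 hx₀)⟩
    _ = ∫ x in 0..1, η x * (r x - rbar) := by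
        simpa using Function.Periodic.intervalIntegral_add_eq
          (f := fun x => η x * (r x - rbar)) (fun x => by simp only [hηper x, hper x])
          (x₀ - 1 / 2) 0
    _ = (∫ x in 0..1, (r x - rbar)) + ∫ x in 0..1, η x * (r x - rbar) := by
        simp [intervalIntegral.integral_sub, hr.intervalIntegrable, rbar]
    _ = (∫ x in 0..1, (1 + η x) * r x) - rbar * ∫ x in 0..1, (1 + η x) := by
        rw [← intervalIntegral.integral_add (hint (by fun_prop)) (hint hf),
          ← intervalIntegral.integral_const_mul,
          ← intervalIntegral.integral_sub (hint (by fun_prop)) (hint (by fun_prop))]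
        exact intervalIntegral.integral_congr fun x _ => by ring

theorem stmt_3 (r : ℝ → ℝ) (hr : Continuous r) (hrper : Function.Periodic r 1)
    (hrnc : ¬ ∃ c, ∀ x, r x = c) (q : ℝ) (hq : q ≠ 0) :
    ∃ D : ℝ → ℝ, ContDiff ℝ 2 D ∧ (∀ x, 0 < D x) ∧ Function.Periodic D 1 ∧
      ∀ (kq k₀ : ℝ) (ψ φ : ℝ → ℝ),
        IsEigenpair q 0 r D kq ψ → IsEigenpair 0 0 r D k₀ φ → k₀ < kq := by
  obtain ⟨w, hwC, hwpos, hwper, hmean⟩ := exists_weight_integral_lt_div hr hrper hrnc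
  set p := fun x => -q⁻¹ * log (w x)
  have hpC : ContDiff ℝ 2 p := contDiff_const.mul (hwC.log fun x => (hwpos x).ne')
  have hpper : Function.Periodic p 1 := fun x => by simp only [p, hwper x]
  have hw (x : ℝ) : exp (-q * p x) = w x := by
    rw [show -q * p x = log (w x) by simp only [p]; field_simp, exp_log (hwpos x)]
  obtain ⟨A, hA, hk₀⟩ := exists_isEigenpair_zero_zero_lt hr hrper (hpC.exp.of_le one_le_two)
    (fun x => exp_pos _) (fun x => by simp only [hpper x]) (sub_pos.2 hmean)
  refine ⟨fun x => A * exp (p x), contDiff_const.mul hpC.exp, fun x => by positivity,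
    fun x => by simp only [hpper x], fun kq k₀ ψ φ hψ hφ => ?_⟩
  have hkq := hψ.integral_exp_mul_div_le hA hpC hpper hr
  simp only [hw] at hkq
  linarith [hk₀ k₀ φ hφ]

end
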